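/- Let d ≥ 2 and suppose the coefficients p_{i,j} ∈ ℂ (2 ≤ i + j ≤ d) satisfy the Cauchy–Riemann conditions p_{i,n-i} = 0 for all n = 2, …, d and i = 0, …, n−1. Let A be the alphabet of letters {(i−1, k−i) : 2 ≤ k ≤ d, 1 ≤ i ≤ k} ∪ {(−1, k) : 2 ≤ k ≤ d} ∪ {(k, −1) : 2 ≤ k ≤ d}, with associated comould derivations B_{(i-1,k-i)} = p_{i,k-i} x^i y^{k-i} ∂x + conj(p_{k-i+1,i-1}) x^{i-1} y^{k-i+1} ∂y, B_{(-1,k)} = p_{0,k} y^k ∂x, B_{(k,-1)} = conj(p_{0,k}) x^k ∂y. Then for every word n₁ n₂ ⋯ n_r of letters of A with length r ≥ 2 that is resonant, i.e. the sum over j of (first coordinate of n_j minus second coordinate of n_j) equals 0, the iterated nested bracket ⁅B_{n_r}, ⁅B_{n_{r-1}}, ⁅…, ⁅B_{n_2}, B_{n_1}⁆…⁆⁆⁆ = 0. (Thus the resonant subset 𝔟_res of the Lie algebra generated by the comoulds is trivial.) -/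

import Mathlib

open MvPolynomial

noncomputable section

/-- The polynomial ring `ℂ[x,y]`. -/
abbrev R2 : Type := MvPolynomial (Fin 2) ℂ

/-- The `ℂ`-derivation `f ∂x + g ∂y` of `ℂ[x,y]`, determined by `x ↦ f`, `y ↦ g`. -/
def der (f g : R2) : Derivation ℂ R2 R2 := MvPolynomial.mkDerivation ℂ ![f, g]

/-- The variable `x`. -/
def x : R2 := MvPolynomial.X 0

/-- The variable `y`. -/
def y : R2 := MvPolynomial.X 1

/-- The comould derivation attached to a letter `n ∈ ℤ²`, for coefficients `p i j = p_{i,j}`: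
`B_{(i-1,k-i)} = p_{i,k-i} xⁱ yᵏ⁻ⁱ ∂x + conj(p_{k-i+1,i-1}) xⁱ⁻¹ yᵏ⁻ⁱ⁺¹ ∂y`,
`B_{(-1,k)} = p_{0,k} yᵏ ∂x`, `B_{(k,-1)} = conj(p_{0,k}) xᵏ ∂y`. -/
def Bop (p : ℕ → ℕ → ℂ) (n : ℤ × ℤ) : Derivation ℂ R2 R2 :=
  if n.1 = -1 then der (C (p 0 n.2.toNat) * y ^ n.2.toNat) 0
  else if n.2 = -1 then der 0 (C (starRingEnd ℂ (p 0 n.1.toNat)) * x ^ n.1.toNat)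
  else
    der (C (p (n.1.toNat + 1) n.2.toNat) * (x ^ (n.1.toNat + 1) * y ^ n.2.toNat))
      (C (starRingEnd ℂ (p (n.2.toNat + 1) n.1.toNat)) * (x ^ n.1.toNat * y ^ (n.2.toNat + 1)))

/-- Membership in the alphabet `A` of letters for a polynomial vector field of degree `d`:
`(i-1, k-i)` with `2 ≤ k ≤ d`, `1 ≤ i ≤ k`, together with `(-1, k)` and `(k, -1)` for
`2 ≤ k ≤ d`. -/
def inA (d : ℕ) (n : ℤ × ℤ) : Prop :=
  (∃ k i : ℕ, 2 ≤ k ∧ k ≤ d ∧ 1 ≤ i ∧ i ≤ k ∧ n = ((i : ℤ) - 1, (k : ℤ) - (i : ℤ))) ∨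
  (∃ k : ℕ, 2 ≤ k ∧ k ≤ d ∧ n = (-1, (k : ℤ))) ∨
  (∃ k : ℕ, 2 ≤ k ∧ k ≤ d ∧ n = ((k : ℤ), -1))

lemma der_X0 (f g : R2) : der f g (X 0) = f := by simp [der, mkDerivation_X]
lemma der_X1 (f g : R2) : der f g (X 1) = g := by simp [der, mkDerivation_X]

lemma der_zero_zero : der 0 0 = 0 := by
  apply derivation_ext
  intro i
  fin_cases i <;> simp [der_X0, der_X1]

def Dx (c : ℂ) (m : ℕ) : Derivation ℂ R2 R2 := der (C c * x^m) 0
def Dy (c : ℂ) (m : ℕ) : Derivation ℂ R2 R2 := der 0 (C c * y^m)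

lemma Dx_X0 (c : ℂ) (m : ℕ) : Dx c m (X 0) = C c * x^m := der_X0 _ _
lemma Dx_X1 (c : ℂ) (m : ℕ) : Dx c m (X 1) = 0 := der_X1 _ _
lemma Dy_X0 (c : ℂ) (m : ℕ) : Dy c m (X 0) = 0 := der_X0 _ _
lemma Dy_X1 (c : ℂ) (m : ℕ) : Dy c m (X 1) = C c * y^m := der_X1 _ _

lemma Dx_apply_x (c : ℂ) (m b : ℕ) (e : ℂ) :
    Dx c m (C e * x ^ b) = C (e * c * b) * x ^ (b - 1 + m) := by
  have h1 : (C e : R2) * x ^ b = e • x ^ b := by rw [smul_eq_C_mul]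
  rw [h1, Derivation.map_smul, Derivation.leibniz_pow, show Dx c m x = C c * x^m from der_X0 _ _]
  simp only [smul_smul, smul_eq_C_mul, nsmul_eq_mul, smul_eq_mul]
  rw [pow_add]
  simp only [map_mul, map_natCast]
  ring
lemma Dx_apply_y (c : ℂ) (m b : ℕ) (e : ℂ) : Dx c m (C e * y ^ b) = 0 := by
  have h1 : (C e : R2) * y ^ b = e • y ^ b := by rw [smul_eq_C_mul]
  have hy : Dx c m y = 0 := der_X1 _ _
  rw [h1, Derivation.map_smul, Derivation.leibniz_pow, hy]
  simp
lemma Dy_apply_y (c : ℂ) (m b : ℕ) (e : ℂ) :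
    Dy c m (C e * y ^ b) = C (e * c * b) * y ^ (b - 1 + m) := by
  have h1 : (C e : R2) * y ^ b = e • y ^ b := by rw [smul_eq_C_mul]
  rw [h1, Derivation.map_smul, Derivation.leibniz_pow, show Dy c m y = C c * y^m from der_X1 _ _]
  simp only [smul_smul, smul_eq_C_mul, nsmul_eq_mul, smul_eq_mul]
  rw [pow_add]
  simp only [map_mul, map_natCast]
  ring
lemma Dy_apply_x (c : ℂ) (m b : ℕ) (e : ℂ) : Dy c m (C e * x ^ b) = 0 := by
  have h1 : (C e : R2) * x ^ b = e • x ^ b := by rw [smul_eq_C_mul]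
  have hx : Dy c m x = 0 := der_X0 _ _
  rw [h1, Derivation.map_smul, Derivation.leibniz_pow, hx]
  simp

lemma lie_xx (a b : ℂ) (k m : ℕ) (hk : 1 ≤ k) (hm : 1 ≤ m) :
    ⁅Dx a k, Dx b m⁆ = Dx (a * b * ((m : ℂ) - (k : ℂ))) (k + m - 1) := by
  apply derivation_ext
  intro i
  fin_cases i
  · show (⁅Dx a k, Dx b m⁆ : Derivation ℂ R2 R2) (X 0) = Dx (a * b * ((m:ℂ) - (k:ℂ))) (k+m-1) (X 0)
    rw [Derivation.commutator_apply, Dx_X0, Dx_X0, Dx_apply_x, Dx_apply_x, Dx_X0]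
    have e1 : m - 1 + k = k + m - 1 := by omega
    have e2 : k - 1 + m = k + m - 1 := by omega
    rw [e1, e2, ← sub_mul, ← map_sub]
    congr 1
    ring
  · show (⁅Dx a k, Dx b m⁆ : Derivation ℂ R2 R2) (X 1) = Dx (a * b * ((m:ℂ) - (k:ℂ))) (k+m-1) (X 1)
    rw [Derivation.commutator_apply, Dx_X1, Dx_X1, map_zero, map_zero, Dx_X1, sub_zero]
lemma lie_yy (a b : ℂ) (k m : ℕ) (hk : 1 ≤ k) (hm : 1 ≤ m) :
    ⁅Dy a k, Dy b m⁆ = Dy (a * b * ((m : ℂ) - (k : ℂ))) (k + m - 1) := by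
  apply derivation_ext
  intro i
  fin_cases i
  · show (⁅Dy a k, Dy b m⁆ : Derivation ℂ R2 R2) (X 0) = Dy (a * b * ((m:ℂ) - (k:ℂ))) (k+m-1) (X 0)
    rw [Derivation.commutator_apply, Dy_X0, Dy_X0, map_zero, map_zero, Dy_X0, sub_zero]
  · show (⁅Dy a k, Dy b m⁆ : Derivation ℂ R2 R2) (X 1) = Dy (a * b * ((m:ℂ) - (k:ℂ))) (k+m-1) (X 1)
    rw [Derivation.commutator_apply, Dy_X1, Dy_X1, Dy_apply_y, Dy_apply_y, Dy_X1]
    have e1 : m - 1 + k = k + m - 1 := by omega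
    have e2 : k - 1 + m = k + m - 1 := by omega
    rw [e1, e2, ← sub_mul, ← map_sub]
    congr 1
    ring
lemma lie_xy (a b : ℂ) (k m : ℕ) : ⁅Dx a k, Dy b m⁆ = 0 := by
  apply derivation_ext
  intro i
  fin_cases i
  · show (⁅Dx a k, Dy b m⁆ : Derivation ℂ R2 R2) (X 0) = (0 : Derivation ℂ R2 R2) (X 0)
    rw [Derivation.commutator_apply, Dy_X0, Dx_X0, map_zero, Dy_apply_x]
    simp
  · show (⁅Dx a k, Dy b m⁆ : Derivation ℂ R2 R2) (X 1) = (0 : Derivation ℂ R2 R2) (X 1)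
    rw [Derivation.commutator_apply, Dy_X1, Dx_X1, map_zero, Dx_apply_y]
    simp
lemma lie_yx (a b : ℂ) (k m : ℕ) : ⁅Dy a k, Dx b m⁆ = 0 := by
  rw [← lie_skew, lie_xy, neg_zero]

lemma classify (d : ℕ) (p : ℕ → ℕ → ℂ)
    (hcr : ∀ n, 2 ≤ n → n ≤ d → ∀ i, i < n → p i (n - i) = 0)
    (n : ℤ × ℤ) (h : inA d n) :
    Bop p n = 0 ∨
    (∃ c k, 2 ≤ k ∧ Bop p n = Dx c k ∧ n.1 - n.2 = (k : ℤ) - 1) ∨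
    (∃ c k, 2 ≤ k ∧ Bop p n = Dy c k ∧ n.1 - n.2 = 1 - (k : ℤ)) := by
  rcases h with ⟨k, i, hk2, hkd, hi1, hik, hn⟩ | ⟨k, hk2, hkd, hn⟩ | ⟨k, hk2, hkd, hn⟩
  · subst hn
    have h1 : ((i : ℤ) - 1 ≠ -1) := by omega
    have h2 : ((k : ℤ) - (i : ℤ) ≠ -1) := by omega
    have ht1 : ((i : ℤ) - 1).toNat = i - 1 := by omega
    have ht2 : ((k : ℤ) - (i : ℤ)).toNat = k - i := by omega
    rw [Bop]
    simp only [h1, h2, if_false, ht1, ht2]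
    have hi1' : i - 1 + 1 = i := by omega
    rw [hi1']
    rcases eq_or_lt_of_le hi1 with he | hgt1
    · -- i = 1 : y-type (unless also i = k, impossible since k ≥ 2)
      right; right
      refine ⟨starRingEnd ℂ (p (k - 1 + 1) 0), k - 1 + 1, by omega, ?_, by omega⟩
      have hp : p 1 (k - 1) = 0 := by
        have := hcr k hk2 hkd 1 (by omega)
        simpa using this
      rw [← he] at *
      have hkk : k - 1 + 1 = k := by omega
      rw [Dy, hkk]
      congr 1
      · simp [hp]
      · norm_num
    · rcases eq_or_lt_of_le hik with hek | hltk
      · -- i = k : x-type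
        right; left
        subst hek
        refine ⟨p i 0, i, hk2, ?_, by omega⟩
        have hki : i - i = 0 := by omega
        rw [hki]
        have hp : p (0 + 1) (i - 1) = 0 := by
          have := hcr i hk2 hkd 1 (by omega)
          simpa using this
        rw [hp, Dx]
        congr 1
        · simp
        · simp
      · -- 1 < i < k : zero
        left
        have hp1 : p i (k - i) = 0 := by
          have := hcr k hk2 hkd i (by omega)
          simpa using this
        have hp2 : p (k - i + 1) (i - 1) = 0 := by
          have := hcr k hk2 hkd (k - i + 1) (by omega)
          have he : k - (k - i + 1) = i - 1 := by omega
          rwa [he] at this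
        simp only [hp1, hp2, map_zero, C_0, zero_mul]
        exact der_zero_zero
  · subst hn
    left
    rw [Bop]
    simp only [if_true]
    have hp : p 0 k = 0 := by
      have := hcr k hk2 hkd 0 (by omega)
      simpa using this
    simp only [Int.toNat_natCast, hp, C_0, zero_mul]
    exact der_zero_zero
  · subst hn
    left
    rw [Bop]
    have h1 : ((k : ℤ) ≠ -1) := by omega
    simp only [h1, if_false, if_true]
    have hp : p 0 k = 0 := by
      have := hcr k hk2 hkd 0 (by omega)
      simpa using this
    simp only [Int.toNat_natCast, hp, map_zero, C_0, zero_mul]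
    exact der_zero_zero


lemma lie_zero' (D : Derivation ℂ R2 R2) : ⁅D, (0 : Derivation ℂ R2 R2)⁆ = 0 := by
  ext a; simp [Derivation.commutator_apply]
lemma zero_lie' (D : Derivation ℂ R2 R2) : ⁅(0 : Derivation ℂ R2 R2), D⁆ = 0 := by
  ext a; simp [Derivation.commutator_apply]

def Good (p : ℕ → ℕ → ℂ) (D : Derivation ℂ R2 R2) (S : ℤ) : Prop :=
  D = 0 ∨ (∃ c m, 1 ≤ m ∧ D = Dx c m ∧ 1 ≤ S) ∨ (∃ c m, 1 ≤ m ∧ D = Dy c m ∧ S ≤ -1)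

lemma step (d : ℕ) (p : ℕ → ℕ → ℂ)
    (hcr : ∀ n, 2 ≤ n → n ≤ d → ∀ i, i < n → p i (n - i) = 0)
    (D : Derivation ℂ R2 R2) (S : ℤ) (hD : Good p D S) (n : ℤ × ℤ) (hn : inA d n) :
    Good p ⁅Bop p n, D⁆ (S + (n.1 - n.2)) := by
  rcases classify d p hcr n hn with h0 | ⟨c, k, hk, hB, hw⟩ | ⟨c, k, hk, hB, hw⟩
  · left; rw [h0]; exact zero_lie' D
  · rcases hD with h | ⟨c', m, hm, hDe, hS⟩ | ⟨c', m, hm, hDe, hS⟩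
    · left; rw [h]; exact lie_zero' _
    · right; left
      exact ⟨_, k + m - 1, by omega,
        by rw [hB, hDe, lie_xx c c' k m (by omega) hm], by omega⟩
    · left; rw [hB, hDe, lie_xy]
  · rcases hD with h | ⟨c', m, hm, hDe, hS⟩ | ⟨c', m, hm, hDe, hS⟩
    · left; rw [h]; exact lie_zero' _
    · left; rw [hB, hDe, lie_yx]
    · right; right
      exact ⟨_, k + m - 1, by omega,
        by rw [hB, hDe, lie_yy c c' k m (by omega) hm], by omega⟩

lemma foldGood (d : ℕ) (p : ℕ → ℕ → ℂ)
    (hcr : ∀ n, 2 ≤ n → n ≤ d → ∀ i, i < n → p i (n - i) = 0) :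
    ∀ (tl : List (ℤ × ℤ)) (D : Derivation ℂ R2 R2) (S : ℤ),
      Good p D S → (∀ m ∈ tl, inA d m) →
      Good p (tl.foldl (fun acc m => ⁅Bop p m, acc⁆) D)
        (S + (tl.map (fun m => m.1 - m.2)).sum) := by
  intro tl
  induction tl with
  | nil => intro D S hD _; simpa using hD
  | cons hd rest ih =>
    intro D S hD hA
    simp only [List.foldl_cons, List.map_cons, List.sum_cons]
    have h1 : Good p ⁅Bop p hd, D⁆ (S + (hd.1 - hd.2)) :=
      step d p hcr D S hD hd (hA hd List.mem_cons_self)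
    have h2 := ih ⁅Bop p hd, D⁆ (S + (hd.1 - hd.2)) h1
      (fun m hm => hA m (List.mem_cons_of_mem _ hm))
    rwa [add_assoc] at h2

/-- Under the Cauchy–Riemann conditions `p_{i,n-i} = 0` for `2 ≤ n ≤ d`, `0 ≤ i ≤ n-1`,
every iterated nested bracket `⁅B_{n_r}, ⁅…, ⁅B_{n₂}, B_{n₁}⁆…⁆⁆` along a resonant word
`n₁ n₂ ⋯ n_r` (`r ≥ 2`) of letters of the alphabet vanishes: the resonant part `𝔟_res`
of the Lie algebra generated by the comoulds is trivial. -/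
theorem stmt12 (d : ℕ) (hd : 2 ≤ d) (p : ℕ → ℕ → ℂ)
    (hcr : ∀ n, 2 ≤ n → n ≤ d → ∀ i, i < n → p i (n - i) = 0) :
    ∀ (n₁ : ℤ × ℤ) (tl : List (ℤ × ℤ)), tl ≠ [] →
      (∀ m ∈ n₁ :: tl, inA d m) →
      ((n₁ :: tl).map (fun m => m.1 - m.2)).sum = 0 →
      tl.foldl (fun acc m => ⁅Bop p m, acc⁆) (Bop p n₁) = 0 := by
  intro n₁ tl _ hA hres
  have hgood : Good p (Bop p n₁) (n₁.1 - n₁.2) := by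
    rcases classify d p hcr n₁ (hA n₁ List.mem_cons_self) with h0 | ⟨c, k, hk, hB, hw⟩ |
      ⟨c, k, hk, hB, hw⟩
    · left; exact h0
    · right; left; exact ⟨c, k, by omega, hB, by omega⟩
    · right; right; exact ⟨c, k, by omega, hB, by omega⟩
  have hfin := foldGood d p hcr tl (Bop p n₁) (n₁.1 - n₁.2) hgood
    (fun m hm => hA m (List.mem_cons_of_mem _ hm))
  simp only [List.map_cons, List.sum_cons] at hres
  rw [hres] at hfin
  rcases hfin with h | ⟨c, m, hm, hD, hS⟩ | ⟨c, m, hm, hD, hS⟩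
  · exact h
  · omega
  · omega

end
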